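/- Let N ≥ 2 be an integer and let c = (c_i)_{0≤i≤N} be a nonnegative differentiable solution of the N-truncated isolated DGED system on an interval I ⊆ ℝ containing 0. Then both the total number of clusters ∑_{i=0}^N c_i(t) and the total mass ∑_{i=0}^N i c_i(t) are constant in t; that is, ∑_{i=0}^N c_i(t) = ∑_{i=0}^N c_i(0) and ∑_{i=0}^N i c_i(t) = ∑_{i=0}^N i c_i(0) for all t ∈ I. -/

import Mathlib

/-!
Every term of the system is the rate `a(p,q;k) c_p c_q` of an event in which a cluster of size
`p` hands `k` of its particles to a cluster of size `q`, turning the pair `(p, q)` into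
`(p - k, q + k)`. Summing the equations against a weight `w` therefore gives
`∑_{p,q,k} (w(p-k) + w(q+k) - w(p) - w(q)) a(p,q;k) c_p c_q`, which vanishes for every affine
weight; `w = 1` and `w(i) = i` give the two conservation laws by the mean value theorem.
-/

open Finset

/-- Truncated operator `Q^N_{1,i}`. -/
noncomputable def QN1 (a : ℕ → ℕ → ℕ → ℝ) (N : ℕ) (c : ℕ → ℝ) (i : ℕ) : ℝ :=
  ∑ k ∈ Finset.Icc 1 (N - i), ∑ j ∈ Finset.Icc 0 (N - k), a (i + k) j k * c (i + k) * c j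

/-- Truncated operator `Q^N_{2,i}`. -/
noncomputable def QN2 (a : ℕ → ℕ → ℕ → ℝ) (N : ℕ) (c : ℕ → ℝ) (i : ℕ) : ℝ :=
  -∑ k ∈ Finset.Icc 1 (N - i), ∑ j ∈ Finset.Icc k N, a j i k * c j * c i

/-- Truncated operator `Q^N_{3,i}`. -/
noncomputable def QN3 (a : ℕ → ℕ → ℕ → ℝ) (N : ℕ) (c : ℕ → ℝ) (i : ℕ) : ℝ :=
  ∑ k ∈ Finset.Icc 1 i, ∑ j ∈ Finset.Icc k N, a j (i - k) k * c j * c (i - k)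

/-- Truncated operator `Q^N_{4,i}`. -/
noncomputable def QN4 (a : ℕ → ℕ → ℕ → ℝ) (N : ℕ) (c : ℕ → ℝ) (i : ℕ) : ℝ :=
  -∑ k ∈ Finset.Icc 1 i, ∑ j ∈ Finset.Icc 0 (N - k), a i j k * c j * c i

/-- `c` is a solution of the `N`-truncated isolated DGED system on the set `I`. -/
def IsTruncSolIso (a : ℕ → ℕ → ℕ → ℝ) (N : ℕ) (I : Set ℝ) (c : ℕ → ℝ → ℝ) : Prop :=
  ∀ t ∈ I,
    HasDerivAt (c 0) (QN1 a N (fun n => c n t) 0 + QN2 a N (fun n => c n t) 0) t ∧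
    (∀ i, 1 ≤ i → i ≤ N - 1 →
      HasDerivAt (c i)
        (QN1 a N (fun n => c n t) i + QN2 a N (fun n => c n t) i +
          QN3 a N (fun n => c n t) i + QN4 a N (fun n => c n t) i) t) ∧
    HasDerivAt (c N) (QN3 a N (fun n => c n t) N + QN4 a N (fun n => c n t) N) t

theorem sum_range_sum_Icc_shift {M : Type*} [AddCommMonoid M] (N : ℕ) (f : ℕ → ℕ → ℕ → M) :
    ∑ i ∈ range (N + 1), ∑ k ∈ Icc 1 (N - i), f (i + k) k i
      = ∑ p ∈ range (N + 1), ∑ k ∈ Icc 1 p, f p k (p - k) := by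
  rw [sum_sigma', sum_sigma']
  refine sum_nbij' (fun x => ⟨x.1 + x.2, x.2⟩) (fun x => ⟨x.1 - x.2, x.2⟩) ?_ ?_ ?_ ?_ ?_ <;>
    simp only [mem_sigma, mem_range, mem_Icc] <;> rintro ⟨i, k⟩ h <;> dsimp only at h ⊢
  · omega
  · omega
  · rw [Nat.add_sub_cancel]
  · rw [Nat.sub_add_cancel h.2.2]
  · rw [Nat.add_sub_cancel]

theorem sum_range_sum_Icc_sum_Icc_swap {M : Type*} [AddCommMonoid M] (N : ℕ)
    (f : ℕ → ℕ → ℕ → M) :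
    ∑ m ∈ range (N + 1), ∑ k ∈ Icc 1 (N - m), ∑ j ∈ Icc k N, f m k j
      = ∑ p ∈ range (N + 1), ∑ k ∈ Icc 1 p, ∑ q ∈ Icc 0 (N - k), f q k p := by
  rw [sum_sigma', sum_sigma', sum_sigma', sum_sigma']
  refine sum_nbij' (fun x => ⟨⟨x.2, x.1.2⟩, x.1.1⟩) (fun x => ⟨⟨x.2, x.1.2⟩, x.1.1⟩)
    ?_ ?_ ?_ ?_ ?_ <;>
    simp only [mem_sigma, mem_range, mem_Icc] <;> rintro ⟨⟨x, y⟩, z⟩ h <;> dsimp only at h ⊢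
  · omega
  · omega

noncomputable def QN (a : ℕ → ℕ → ℕ → ℝ) (N : ℕ) (c : ℕ → ℝ) (i : ℕ) : ℝ :=
  QN1 a N c i + QN2 a N c i + QN3 a N c i + QN4 a N c i

@[simp] theorem QN1_self (a : ℕ → ℕ → ℕ → ℝ) (N : ℕ) (c : ℕ → ℝ) : QN1 a N c N = 0 := by
  simp [QN1]

@[simp] theorem QN2_self (a : ℕ → ℕ → ℕ → ℝ) (N : ℕ) (c : ℕ → ℝ) : QN2 a N c N = 0 := by
  simp [QN2]

@[simp] theorem QN3_zero (a : ℕ → ℕ → ℕ → ℝ) (N : ℕ) (c : ℕ → ℝ) : QN3 a N c 0 = 0 := by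
  simp [QN3]

@[simp] theorem QN4_zero (a : ℕ → ℕ → ℕ → ℝ) (N : ℕ) (c : ℕ → ℝ) : QN4 a N c 0 = 0 := by
  simp [QN4]

theorem IsTruncSolIso.hasDerivAt {a : ℕ → ℕ → ℕ → ℝ} {N : ℕ} {I : Set ℝ} {c : ℕ → ℝ → ℝ}
    (hc : IsTruncSolIso a N I c) {s : ℝ} (hs : s ∈ I) {i : ℕ} (hi : i ≤ N) :
    HasDerivAt (c i) (QN a N (fun n => c n s) i) s := by
  obtain ⟨hfirst, hmiddle, hlast⟩ := hc s hs
  rcases Nat.eq_zero_or_pos i with rfl | hpos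
  · simpa [QN] using hfirst
  rcases hi.eq_or_lt with rfl | hlt
  · simpa [QN] using hlast
  · exact hmiddle i hpos (by omega)

section WeakFormulation

variable (a : ℕ → ℕ → ℕ → ℝ) (N : ℕ) (c : ℕ → ℝ) (w : ℕ → ℝ)

theorem sum_mul_QN1 :
    ∑ i ∈ range (N + 1), w i * QN1 a N c i
      = ∑ p ∈ range (N + 1), ∑ k ∈ Icc 1 p, ∑ q ∈ Icc 0 (N - k),
          w (p - k) * (a p q k * c p * c q) := by
  simp only [QN1, mul_sum]
  exact sum_range_sum_Icc_shift N fun p k i => ∑ q ∈ Icc 0 (N - k), w i * (a p q k * c p * c q)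

theorem sum_mul_QN2 :
    ∑ i ∈ range (N + 1), w i * QN2 a N c i
      = -∑ p ∈ range (N + 1), ∑ k ∈ Icc 1 p, ∑ q ∈ Icc 0 (N - k),
          w q * (a p q k * c p * c q) := by
  simp only [QN2, mul_neg, mul_sum, sum_neg_distrib]
  rw [sum_range_sum_Icc_sum_Icc_swap N fun m k j => w m * (a j m k * c j * c m)]

theorem sum_mul_QN3 :
    ∑ i ∈ range (N + 1), w i * QN3 a N c i
      = ∑ p ∈ range (N + 1), ∑ k ∈ Icc 1 p, ∑ q ∈ Icc 0 (N - k),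
          w (q + k) * (a p q k * c p * c q) := by
  rw [← sum_range_sum_Icc_sum_Icc_swap N fun m k j => w (m + k) * (a j m k * c j * c m)]
  simp only [QN3, mul_sum]
  exact (sum_range_sum_Icc_shift N fun i k m => ∑ j ∈ Icc k N, w i * (a j m k * c j * c m)).symm

theorem sum_mul_QN4 :
    ∑ i ∈ range (N + 1), w i * QN4 a N c i
      = -∑ p ∈ range (N + 1), ∑ k ∈ Icc 1 p, ∑ q ∈ Icc 0 (N - k),
          w p * (a p q k * c p * c q) := by
  simp only [QN4, mul_neg, mul_sum, sum_neg_distrib, mul_right_comm]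

theorem sum_mul_QN :
    ∑ i ∈ range (N + 1), w i * QN a N c i
      = ∑ p ∈ range (N + 1), ∑ k ∈ Icc 1 p, ∑ q ∈ Icc 0 (N - k),
          (w (p - k) + w (q + k) - w p - w q) * (a p q k * c p * c q) := by
  simp only [QN, mul_add, sum_add_distrib, sum_mul_QN1, sum_mul_QN2, sum_mul_QN3, sum_mul_QN4,
    add_mul, sub_mul, sum_sub_distrib]
  ring

theorem sum_mul_QN_eq_zero (hw : ∀ p q k, k ≤ p → w (p - k) + w (q + k) = w p + w q) :
    ∑ i ∈ range (N + 1), w i * QN a N c i = 0 := by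
  rw [sum_mul_QN]
  refine sum_eq_zero fun p _ => sum_eq_zero fun k hk => sum_eq_zero fun q _ => ?_
  rw [hw p q k (mem_Icc.mp hk).2]
  ring

end WeakFormulation

theorem Convex.eq_of_forall_hasDerivAt_zero {I : Set ℝ} (hI : Convex ℝ I) {f : ℝ → ℝ}
    (hf : ∀ s ∈ I, HasDerivAt f 0 s) {x y : ℝ} (hx : x ∈ I) (hy : y ∈ I) : f y = f x := by
  have h := hI.norm_image_sub_le_of_norm_hasDerivWithin_le (C := 0)
    (fun s hs => (hf s hs).hasDerivWithinAt) (fun _ _ => by simp) hx hy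
  rwa [zero_mul, norm_le_zero_iff, sub_eq_zero] at h

theorem IsTruncSolIso.sum_mul_eq {a : ℕ → ℕ → ℕ → ℝ} {N : ℕ} {I : Set ℝ} {c : ℕ → ℝ → ℝ}
    (hc : IsTruncSolIso a N I c) (hI : Convex ℝ I) {w : ℕ → ℝ}
    (hw : ∀ p q k, k ≤ p → w (p - k) + w (q + k) = w p + w q) {x y : ℝ} (hx : x ∈ I)
    (hy : y ∈ I) :
    ∑ i ∈ range (N + 1), w i * c i y = ∑ i ∈ range (N + 1), w i * c i x := by
  refine hI.eq_of_forall_hasDerivAt_zero (f := fun s => ∑ i ∈ range (N + 1), w i * c i s)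
    (fun s hs => ?_) hx hy
  rw [← sum_mul_QN_eq_zero a N (fun n => c n s) w hw]
  exact HasDerivAt.fun_sum fun i hi =>
    (hc.hasDerivAt hs (Nat.lt_succ_iff.mp (mem_range.mp hi))).const_mul (w i)

theorem truncated_isolated_conservation_general
    (a : ℕ → ℕ → ℕ → ℝ)
    (N : ℕ) (I : Set ℝ) (hI : Convex ℝ I) (hI0 : (0 : ℝ) ∈ I)
    (c : ℕ → ℝ → ℝ) (hc : IsTruncSolIso a N I c)
    (t : ℝ) (ht : t ∈ I) :
    (∑ i ∈ Finset.range (N + 1), c i t = ∑ i ∈ Finset.range (N + 1), c i 0) ∧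
    (∑ i ∈ Finset.range (N + 1), (i : ℝ) * c i t
      = ∑ i ∈ Finset.range (N + 1), (i : ℝ) * c i 0) := by
  constructor
  · simpa using hc.sum_mul_eq hI (w := fun _ => 1) (fun _ _ _ _ => rfl) hI0 ht
  · refine hc.sum_mul_eq hI (fun p q k hk => ?_) hI0 ht
    push_cast [Nat.cast_sub hk]
    ring

/-- Corollary 4.2: conservation of the total number of clusters and of the total mass
for nonnegative solutions of the truncated isolated system. -/
theorem truncated_isolated_conservation
    (a : ℕ → ℕ → ℕ → ℝ) (ha : ∀ i j k, 0 ≤ a i j k)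
    (hzero : ∀ p : ℕ, 1 ≤ p → a p 0 p = 0)
    (N : ℕ) (hN : 2 ≤ N) (I : Set ℝ) (hI : Convex ℝ I) (hI0 : (0 : ℝ) ∈ I)
    (c : ℕ → ℝ → ℝ) (hc : IsTruncSolIso a N I c)
    (hnn : ∀ i, i ≤ N → ∀ t ∈ I, 0 ≤ c i t)
    (t : ℝ) (ht : t ∈ I) :
    (∑ i ∈ Finset.range (N + 1), c i t = ∑ i ∈ Finset.range (N + 1), c i 0) ∧
    (∑ i ∈ Finset.range (N + 1), (i : ℝ) * c i t
      = ∑ i ∈ Finset.range (N + 1), (i : ℝ) * c i 0) :=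
  truncated_isolated_conservation_general a N I hI hI0 c hc t ht
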